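/- arXiv:1302.2421 — 3 statements merged into one kernel-verified Lean document; each statement's English description precedes it below -/
import Mathlib

section
/- Let Ω ⊂ ℝ^d be a nonempty open set and let μ be a probability measure supported on the closure of Ω. If the mapping x ↦ h_μ(x) is continuous on the closure of Ω, then it is constant, equal to d. -/
/-!
By Besicovitch differentiation, the ratio of the Lebesgue measure of a small ball to its
`μ`-measure stays bounded at `μ`-almost every centre, and the reverse ratio stays bounded at
Lebesgue-almost every centre. Hence `h_μ ≤ d` holds `μ`-a.e. and `h_μ ≥ d` holds Lebesgue-a.e.
on the support. Nonempty open subsets of `Ω` have positive `μ`- and Lebesgue measure, so each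
inequality holds on a dense subset of `Ω`, and continuity carries it to the closure of `Ω`.
-/
open MeasureTheory Metric Filter Set
open scoped ENNReal Topology
open Classical

/-- The lower local dimension (local Hölder exponent) of a measure `μ` on `ℝ^d` at `x`:
`liminf_{r → 0⁺} log μ(B(x,r)) / log r`, with the convention that it is `+∞`
when `x` does not belong to the support of `μ`. -/
noncomputable def locDimE {d : ℕ} (μ : Measure (EuclideanSpace ℝ (Fin d)))
    (x : EuclideanSpace ℝ (Fin d)) : EReal :=
  if ∀ r : ℝ, 0 < r → 0 < μ (ball x r) then
    Filter.liminf
      (fun r : ℝ => ((Real.log ((μ (ball x r)).toReal) / Real.log r : ℝ) : EReal))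
      (nhdsWithin 0 (Set.Ioi 0))
  else ⊤

open Real Module
open scoped NNReal

noncomputable def lowerLocalDim {X : Type*} [PseudoMetricSpace X] [MeasurableSpace X]
    (μ : Measure X) (x : X) : EReal :=
  liminf (fun r : ℝ => ((log (μ.real (ball x r)) / log r : ℝ) : EReal)) (𝓝[>] 0)

lemma locDimE_eq_lowerLocalDim {d : ℕ} {μ : Measure (EuclideanSpace ℝ (Fin d))}
    {x : EuclideanSpace ℝ (Fin d)} (hx : x ∈ μ.support) : locDimE μ x = lowerLocalDim μ x :=
  if_pos fun _ hr => (μ.mem_support_iff_forall x).1 hx _ (ball_mem_nhds x hr)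

lemma tendsto_log_div_log_add_nhdsGT (C s : ℝ) :
    Tendsto (fun r : ℝ => log C / log r + s) (𝓝[>] 0) (𝓝 s) := by
  have h : Tendsto (fun r : ℝ => log C * (log r)⁻¹) (𝓝[>] 0) (𝓝 (log C * 0)) :=
    (tendsto_inv_atBot_zero.comp tendsto_log_nhdsGT_zero).const_mul _
  simpa [div_eq_mul_inv] using h.add_const s

lemma log_mul_rpow_div_log {C r : ℝ} (s : ℝ) (hC : 0 < C) (hr : 0 < r) (hr1 : r ≠ 1) :
    log (C * r ^ s) / log r = log C / log r + s := by
  have hlog : log r ≠ 0 := log_ne_zero_of_pos_of_ne_one hr hr1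
  rw [log_mul hC.ne' (rpow_pos_of_pos hr s).ne', log_rpow hr, add_div,
    mul_div_cancel_right₀ _ hlog]

lemma le_liminf_log_div_log {f : ℝ → ℝ} {s C : ℝ} (hC : 0 < C)
    (hpos : ∀ᶠ r in 𝓝[>] 0, 0 < f r) (hle : ∀ᶠ r in 𝓝[>] 0, f r ≤ C * r ^ s) :
    (s : EReal) ≤ liminf (fun r : ℝ => ((log (f r) / log r : ℝ) : EReal)) (𝓝[>] 0) := by
  rw [← (EReal.tendsto_coe.2 (tendsto_log_div_log_add_nhdsGT C s)).liminf_eq]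
  refine liminf_le_liminf ?_
  filter_upwards [hpos, hle, Ioo_mem_nhdsGT one_pos] with r hfr hfr_le ⟨hr0, hr1⟩
  rw [EReal.coe_le_coe_iff, ← log_mul_rpow_div_log s hC hr0 hr1.ne]
  exact div_le_div_of_nonpos_of_le (log_neg hr0 hr1).le (log_le_log hfr hfr_le)

lemma liminf_log_div_log_le {f : ℝ → ℝ} {s c : ℝ} (hc : 0 < c)
    (hle : ∀ᶠ r in 𝓝[>] 0, c * r ^ s ≤ f r) :
    liminf (fun r : ℝ => ((log (f r) / log r : ℝ) : EReal)) (𝓝[>] 0) ≤ s := by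
  rw [← (EReal.tendsto_coe.2 (tendsto_log_div_log_add_nhdsGT c s)).liminf_eq]
  refine liminf_le_liminf ?_
  filter_upwards [hle, Ioo_mem_nhdsGT one_pos] with r hfr_ge ⟨hr0, hr1⟩
  rw [EReal.coe_le_coe_iff, ← log_mul_rpow_div_log s hc hr0 hr1.ne]
  exact div_le_div_of_nonpos_of_le (log_neg hr0 hr1).le (log_le_log (by positivity) hfr_ge)

lemma ae_eventually_measure_closedBall_le_mul {X : Type*} [MetricSpace X] [MeasurableSpace X]
    [BorelSpace X] [SecondCountableTopology X] [HasBesicovitchCovering X]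
    (ρ μ : Measure X) [IsLocallyFiniteMeasure μ] [IsLocallyFiniteMeasure ρ] :
    ∀ᵐ x ∂μ, ∃ C : ℝ≥0, 0 < C ∧
      ∀ᶠ r in 𝓝[>] 0, ρ (closedBall x r) ≤ C * μ (closedBall x r) := by
  filter_upwards [Besicovitch.ae_tendsto_rnDeriv ρ μ, ρ.rnDeriv_lt_top μ] with x hx hfin
  obtain ⟨C, hC, -⟩ := ENNReal.lt_iff_exists_nnreal_btwn.1 hfin
  have hC0 : (C : ℝ≥0∞) ≠ 0 := (pos_of_gt hC).ne'
  refine ⟨C, ENNReal.coe_pos.1 (pos_of_gt hC), (hx.eventually_lt_const hC).mono fun r hr => ?_⟩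
  exact (ENNReal.div_le_iff_le_mul (Or.inr ENNReal.coe_ne_top) (Or.inr hC0)).1 hr.le

lemma measureReal_le_mul_of_le {X : Type*} [MeasurableSpace X] {μ ν : Measure X} {s t : Set X}
    {C : ℝ≥0} (ht : ν t ≠ ∞) (h : μ s ≤ C * ν t) : μ.real s ≤ C * ν.real t := by
  simpa [measureReal_def] using ENNReal.toReal_mono (ENNReal.mul_ne_top ENNReal.coe_ne_top ht) h

section FiniteDimensional

variable {E : Type*} [NormedAddCommGroup E] [NormedSpace ℝ E] [FiniteDimensional ℝ E]
  [MeasurableSpace E] [BorelSpace E] (μ : Measure E) [IsLocallyFiniteMeasure μ]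

lemma ae_finrank_le_lowerLocalDim (ν : Measure E) [ν.IsAddHaarMeasure] :
    ∀ᵐ x ∂ν, x ∈ μ.support → (finrank ℝ E : EReal) ≤ lowerLocalDim μ x := by
  filter_upwards [ae_eventually_measure_closedBall_le_mul μ ν] with x hx hsupp
  obtain ⟨C, hC0, hC⟩ := hx
  have hpos : ∀ᶠ r in 𝓝[>] (0 : ℝ), 0 < μ.real (ball x r) :=
    eventually_mem_nhdsWithin.mono fun r hr => ENNReal.toReal_pos
      ((μ.mem_support_iff_forall x).1 hsupp _ (ball_mem_nhds x hr)).ne' measure_ball_lt_top.ne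
  have hball : 0 < ν.real (ball (0 : E) 1) :=
    ENNReal.toReal_pos (measure_ball_pos ν 0 one_pos).ne' measure_ball_lt_top.ne
  have := le_liminf_log_div_log (s := finrank ℝ E) (mul_pos hC0 hball) hpos ?_
  · exact_mod_cast this
  filter_upwards [hC, eventually_mem_nhdsWithin] with r hr (hr0 : 0 < r)
  calc μ.real (ball x r) ≤ C * ν.real (closedBall x r) :=
        measureReal_le_mul_of_le measure_closedBall_lt_top.ne
          ((measure_mono ball_subset_closedBall).trans hr)
    _ = C * ν.real (ball 0 1) * r ^ (finrank ℝ E : ℝ) := by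
      rw [Measure.addHaar_real_closedBall ν x hr0.le, rpow_natCast]
      ring

lemma ae_lowerLocalDim_le_finrank :
    ∀ᵐ x ∂μ, lowerLocalDim μ x ≤ finrank ℝ E := by
  set ν : Measure E := Measure.addHaar
  filter_upwards [ae_eventually_measure_closedBall_le_mul ν μ] with x hx
  obtain ⟨C, hC0, hC⟩ := hx
  have hball : 0 < ν.real (ball (0 : E) 1) :=
    ENNReal.toReal_pos (measure_ball_pos ν 0 one_pos).ne' measure_ball_lt_top.ne
  have half : Tendsto (· / 2) (𝓝[>] (0 : ℝ)) (𝓝[>] 0) :=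
    tendsto_nhdsWithin_iff.2 ⟨((continuous_id.div_const 2).tendsto' 0 0 (zero_div 2)).mono_left
      nhdsWithin_le_nhds, eventually_mem_nhdsWithin.mono fun r hr => mem_Ioi.2 (half_pos hr)⟩
  have := liminf_log_div_log_le (f := fun r => μ.real (ball x r)) (s := finrank ℝ E)
    (c := ν.real (ball 0 1) / (C * 2 ^ (finrank ℝ E : ℝ))) (by positivity) ?_
  · exact_mod_cast this
  filter_upwards [half.eventually hC, eventually_mem_nhdsWithin] with r hr (hr0 : 0 < r)
  have hν : ν.real (closedBall x (r / 2)) ≤ C * μ.real (ball x r) :=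
    measureReal_le_mul_of_le measure_ball_lt_top.ne
      (hr.trans (by gcongr; exact closedBall_subset_ball (half_lt_self hr0)))
  rw [Measure.addHaar_real_closedBall ν x (by positivity), div_pow, div_mul_eq_mul_div,
    div_le_iff₀ (by positivity)] at hν
  rw [rpow_natCast, rpow_natCast, div_mul_eq_mul_div, div_le_iff₀ (by positivity)]
  linarith

end FiniteDimensional

lemma subset_closure_setOf_of_ae {X : Type*} [TopologicalSpace X] [MeasurableSpace X]
    {μ : Measure X} {U : Set X} {p : X → Prop} (hU : IsOpen U) (hUμ : U ⊆ μ.support)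
    (hp : ∀ᵐ x ∂μ, p x) : U ⊆ closure {x | x ∈ U ∧ p x} := by
  intro u hu
  rw [mem_closure_iff_nhds]
  intro t ht
  have hμ : μ (t ∩ U) ≠ 0 :=
    ((μ.mem_support_iff_forall u).1 (hUμ hu) _ (inter_mem ht (hU.mem_nhds hu))).ne'
  obtain ⟨x, ⟨hxt, hxU⟩, hpx⟩ :=
    μ.exists_mem_of_measure_ne_zero_of_ae hμ (ae_restrict_of_ae hp)
  exact ⟨x, hxt, hxU, hpx⟩

lemma ContinuousOn.mapsTo_closure_of_ae {X Y : Type*} [TopologicalSpace X] [MeasurableSpace X]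
    [TopologicalSpace Y] {μ : Measure X} {f : X → Y} {U : Set X} {t : Set Y}
    (hf : ContinuousOn f (closure U)) (hU : IsOpen U) (hUμ : U ⊆ μ.support) (ht : IsClosed t)
    (hft : ∀ᵐ x ∂μ, x ∈ U → f x ∈ t) : MapsTo f (closure U) t := by
  have hclosed : IsClosed (closure U ∩ f ⁻¹' t) :=
    hf.preimage_isClosed_of_isClosed isClosed_closure ht
  have hdense : U ⊆ closure U ∩ f ⁻¹' t :=
    (subset_closure_setOf_of_ae hU hUμ hft).trans <| closure_minimal
      (fun x ⟨hxU, hx⟩ => ⟨subset_closure hxU, hx hxU⟩) hclosed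
  exact fun x hx => (closure_minimal hdense hclosed hx).2

theorem locDim_continuous_implies_constant_general
    {d : ℕ} (Ω : Set (EuclideanSpace ℝ (Fin d))) (hΩopen : IsOpen Ω)
    (μ : Measure (EuclideanSpace ℝ (Fin d))) [IsProbabilityMeasure μ]
    (hmin : ∀ F : Set (EuclideanSpace ℝ (Fin d)), IsClosed F → μ Fᶜ = 0 → closure Ω ⊆ F)
    (hcont : ContinuousOn (locDimE μ) (closure Ω)) :
    ∀ x ∈ closure Ω, locDimE μ x = (d : EReal) := by
  have hsupp : closure Ω ⊆ μ.support := fun x hx => by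
    rw [μ.support_eq_sInter]
    exact mem_sInter.2 fun F ⟨hF, hμF⟩ => hmin F hF hμF hx
  have hΩsupp : Ω ⊆ μ.support := subset_closure.trans hsupp
  have hle : MapsTo (locDimE μ) (closure Ω) (Iic (d : EReal)) := by
    refine hcont.mapsTo_closure_of_ae hΩopen hΩsupp isClosed_Iic ?_
    filter_upwards [ae_lowerLocalDim_le_finrank μ] with x hx hxΩ
    rw [finrank_euclideanSpace_fin] at hx
    rwa [mem_Iic, locDimE_eq_lowerLocalDim (hΩsupp hxΩ)]
  have hge : MapsTo (locDimE μ) (closure Ω) (Ici (d : EReal)) := by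
    refine hcont.mapsTo_closure_of_ae (μ := volume) hΩopen
      (by rw [Measure.support_eq_univ]; exact subset_univ Ω) isClosed_Ici ?_
    filter_upwards [ae_finrank_le_lowerLocalDim μ volume] with x hx hxΩ
    rw [finrank_euclideanSpace_fin] at hx
    rw [mem_Ici, locDimE_eq_lowerLocalDim (hΩsupp hxΩ)]
    exact hx (hΩsupp hxΩ)
  exact fun x hx => le_antisymm (hle hx) (hge hx)

/-- If `μ` is a probability measure supported on the closure of a nonempty open set
`Ω ⊆ ℝ^d` (i.e. the closure of `Ω` is the smallest closed set of full `μ`-measure),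
and the local dimension map `x ↦ h_μ(x)` is continuous on the closure of `Ω`,
then it is constant there, equal to `d`. -/
theorem locDim_continuous_implies_constant
    {d : ℕ} (Ω : Set (EuclideanSpace ℝ (Fin d))) (hΩopen : IsOpen Ω) (hΩne : Ω.Nonempty)
    (μ : Measure (EuclideanSpace ℝ (Fin d))) [IsProbabilityMeasure μ]
    (hfull : μ (closure Ω)ᶜ = 0)
    (hmin : ∀ F : Set (EuclideanSpace ℝ (Fin d)), IsClosed F → μ Fᶜ = 0 → closure Ω ⊆ F)
    (hcont : ContinuousOn (locDimE μ) (closure Ω)) :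
    ∀ x ∈ closure Ω, locDimE μ x = (d : EReal) :=
  locDim_continuous_implies_constant_general Ω hΩopen μ hmin hcont
end

section
/- Let μ be a non-atomic positive Borel measure supported on [0,1] and let 0 ≤ α < 1. Assume that for every ε > 0 the set {x ∈ [0,1] : h_μ(x) ≤ α + ε} is dense in [0,1], and that h_μ(x) ≥ α for all x ∈ [0,1]. Then the set E_μ(α) = {x ∈ [0,1] : h_μ(x) = α} is dense in [0,1]. -/
open MeasureTheory Metric Filter Set
open scoped ENNReal Topology
open Classical

/-- The lower local dimension (local Hölder exponent) of a measure `μ` on `ℝ` at `x`: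
`liminf_{r → 0⁺} log μ(B(x,r)) / log r`, with the convention that it is `+∞`
when `x` does not belong to the support of `μ`. -/
noncomputable def locDim (μ : Measure ℝ) (x : ℝ) : EReal :=
  if ∀ r : ℝ, 0 < r → 0 < μ (ball x r) then
    Filter.liminf
      (fun r : ℝ => ((Real.log ((μ (ball x r)).toReal) / Real.log r : ℝ) : EReal))
      (nhdsWithin 0 (Set.Ioi 0))
  else ⊤

/-- Hausdorff dimension of a set, with the convention `dim ∅ = -∞`. -/
noncomputable def dimHE (s : Set ℝ) : EReal :=
  if s.Nonempty then ((dimH s : ℝ≥0∞) : EReal) else ⊥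

/-- The multifractal spectrum of a measure supported in `[0,1]`:
`d_μ(h) = dim_H {x ∈ [0,1] : h_μ(x) = h}`, with `dim ∅ = -∞`. -/
noncomputable def spec (μ : Measure ℝ) (h : EReal) : EReal :=
  dimHE {x ∈ Set.Icc (0:ℝ) 1 | locDim μ x = h}

/-- A measure supported in `[0,1]` is homogeneously multifractal (HM) if its restriction to any
non-degenerate subinterval of `[0,1]` has the same multifractal spectrum as the whole measure. -/
def IsHM (μ : Measure ℝ) : Prop :=
  ∀ a b : ℝ, 0 ≤ a → a < b → b ≤ 1 →
    ∀ h : EReal, 0 ≤ h →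
      dimHE {x ∈ Set.Ioo a b | locDim μ x = h} = spec μ h

/-!
For `β ≥ 0`, a point `x` has `h_μ(x) ≤ β` as soon as, for every `β' > β` and `δ > 0`, some ball
`B(x, r)` with `r < δ` has mass exceeding `r ^ β'`. For fixed `β'` and `δ` this is an open
condition, and by the density hypothesis it holds on a dense subset of `[0,1]` as soon as
`β' > α`. Baire's theorem applied to countably many such `β' ↓ α` and `δ ↓ 0` then yields a dense
set of points of `[0,1]` with `h_μ ≤ α`, hence `h_μ = α` by the lower bound.
-/

theorem subset_closure_inter_iInter_of_isOpen {X ι : Type*} [TopologicalSpace X] [BaireSpace X]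
    [Countable ι] {K : Set X} {U : ι → Set X} (hK : K ⊆ closure (interior K))
    (hU : ∀ i, IsOpen (U i)) (hKU : ∀ i, K ⊆ closure (U i)) :
    K ⊆ closure (K ∩ ⋂ i, U i) := by
  -- adding `(closure K)ᶜ` makes each `U i` dense in all of `X` without changing it on `K`
  have hdense : ∀ i, Dense (U i ∪ (closure K)ᶜ) := fun i => by
    refine dense_iff_closure_eq.2 (eq_univ_of_univ_subset ?_)
    rw [← union_compl_self (closure K), closure_union]
    exact union_subset_union (closure_minimal (hKU i) isClosed_closure) subset_closure
  have hD := dense_iInter_of_isOpen (fun i => (hU i).union isClosed_closure.isOpen_compl) hdense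
  intro x hx
  refine mem_closure_iff.2 fun W hW hxW => ?_
  obtain ⟨y, hyW, hyK⟩ := mem_closure_iff.1 (hK hx) W hW hxW
  obtain ⟨z, ⟨hzW, hzK⟩, hzD⟩ :=
    hD.inter_open_nonempty (W ∩ interior K) (hW.inter isOpen_interior) ⟨y, hyW, hyK⟩
  refine ⟨z, hzW, interior_subset hzK, mem_iInter.2 fun i => ?_⟩
  exact (mem_iInter.1 hzD i).resolve_right (not_not.2 (subset_closure (interior_subset hzK)))

theorem rpow_lt_iff_log_div_log_lt {r t β : ℝ} (hr0 : 0 < r) (hr1 : r < 1) (ht : 0 < t) :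
    r ^ β < t ↔ Real.log t / Real.log r < β := by
  rw [div_lt_iff_of_neg (Real.log_neg hr0 hr1), ← Real.log_rpow hr0,
    Real.log_lt_log_iff (Real.rpow_pos_of_pos hr0 β) ht]

def heavyBallSet (μ : Measure ℝ) (β δ : ℝ) : Set ℝ :=
  {x | ∃ r : ℝ, 0 < r ∧ r < δ ∧ ENNReal.ofReal (r ^ β) < μ (ball x r)}

section heavyBallSet

variable {μ : Measure ℝ}

theorem isOpen_heavyBallSet (β δ : ℝ) : IsOpen (heavyBallSet μ β δ) := by
  refine isOpen_iff_mem_nhds.2 ?_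
  rintro x ⟨r, hr0, hrδ, hrμ⟩
  have hcont : ContinuousAt (fun s : ℝ => ENNReal.ofReal (s ^ β)) r :=
    ENNReal.continuous_ofReal.continuousAt.comp (Real.continuousAt_rpow_const r β (Or.inl hr0.ne'))
  have hnear : ∀ᶠ s in 𝓝[>] r, (ENNReal.ofReal (s ^ β) < μ (ball x r) ∧ s < δ) ∧ r < s :=
    ((hcont.eventually_lt continuousAt_const hrμ).and
      (eventually_lt_nhds hrδ)).filter_mono nhdsWithin_le_nhds |>.and self_mem_nhdsWithin
  obtain ⟨r', ⟨hr'μ, hr'δ⟩, hrr'⟩ := hnear.exists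
  -- `B(x, r) ⊆ B(y, r')` once `y` is within `r' - r` of `x`
  filter_upwards [ball_mem_nhds x (sub_pos.2 hrr')] with y hy
  refine ⟨r', hr0.trans hrr', hr'δ, hr'μ.trans_le (measure_mono (ball_subset_ball' ?_))⟩
  rw [dist_comm]
  linarith [mem_ball.1 hy]

theorem mem_heavyBallSet_of_locDim_lt {x β δ : ℝ} (hδ : 0 < δ) (hx : locDim μ x < β) :
    x ∈ heavyBallSet μ β δ := by
  rw [locDim] at hx
  split_ifs at hx with hpos
  · obtain ⟨r, hr, hr0, hrδ⟩ := ((frequently_lt_of_liminf_lt (by isBoundedDefault) hx).and_eventually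
      (Ioo_mem_nhdsGT (lt_min hδ one_pos))).exists
    refine ⟨r, hr0, hrδ.trans_le (min_le_left _ _), ?_⟩
    rcases eq_or_ne (μ (ball x r)) ⊤ with htop | htop
    · simp [htop]
    rw [ENNReal.ofReal_lt_iff_lt_toReal (by positivity) htop,
      rpow_lt_iff_log_div_log_lt hr0 (hrδ.trans_le (min_le_right _ _))
        (ENNReal.toReal_pos (hpos r hr0).ne' htop)]
    exact_mod_cast hr
  · exact absurd hx not_top_lt

theorem locDim_le_of_forall_mem_heavyBallSet {x β : ℝ} (hβ : 0 ≤ β)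
    (hx : ∀ δ > 0, x ∈ heavyBallSet μ β δ) : locDim μ x ≤ β := by
  have hpos : ∀ r : ℝ, 0 < r → 0 < μ (ball x r) := fun r hr => by
    obtain ⟨r', -, hr'r, hr'μ⟩ := hx r hr
    exact (zero_le.trans_lt hr'μ).trans_le (measure_mono (ball_subset_ball hr'r.le))
  rw [locDim, if_pos hpos]
  refine liminf_le_of_frequently_le ((nhdsGT_basis 0).frequently_iff.2 fun u hu => ?_)
    (by isBoundedDefault)
  obtain ⟨r, hr0, hrδ, hrμ⟩ := hx (min u 1) (lt_min hu one_pos)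
  refine ⟨r, ⟨hr0, hrδ.trans_le (min_le_left _ _)⟩, ?_⟩
  rcases eq_or_ne (μ (ball x r)) ⊤ with htop | htop
  · simpa [htop] using hβ
  rw [ENNReal.ofReal_lt_iff_lt_toReal (by positivity) htop,
    rpow_lt_iff_log_div_log_lt hr0 (hrδ.trans_le (min_le_right _ _))
      (ENNReal.toReal_pos (hpos r hr0).ne' htop)] at hrμ
  exact_mod_cast hrμ.le

theorem locDim_le_of_forall_nat_mem_heavyBallSet {x β : ℝ} (hβ : 0 ≤ β)
    (hx : ∀ n m : ℕ, x ∈ heavyBallSet μ (β + 1 / (n + 1)) (1 / (m + 1))) : locDim μ x ≤ β := by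
  refine EReal.le_of_forall_lt_iff_le.1 fun z hz => ?_
  obtain ⟨n, hn⟩ := exists_nat_one_div_lt (sub_pos.2 (EReal.coe_lt_coe_iff.1 hz))
  refine (locDim_le_of_forall_mem_heavyBallSet (β := β + 1 / (n + 1)) (by positivity)
    fun δ hδ => ?_).trans
    (EReal.coe_le_coe_iff.2 (by linarith))
  obtain ⟨m, hm⟩ := exists_nat_one_div_lt hδ
  obtain ⟨r, hr0, hrm, hrμ⟩ := hx n m
  exact ⟨r, hr0, hrm.trans hm, hrμ⟩

end heavyBallSet

theorem level_set_dense_general (μ : Measure ℝ)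
    (α : ℝ) (hα0 : 0 ≤ α)
    (hdense : ∀ ε : ℝ, 0 < ε →
      Set.Icc (0:ℝ) 1 ⊆ closure {x ∈ Set.Icc (0:ℝ) 1 | locDim μ x ≤ ((α + ε : ℝ) : EReal)})
    (hlow : ∀ x ∈ Set.Icc (0:ℝ) 1, (α : EReal) ≤ locDim μ x) :
    Set.Icc (0:ℝ) 1 ⊆ closure {x ∈ Set.Icc (0:ℝ) 1 | locDim μ x = (α : EReal)} := by
  set U : ℕ × ℕ → Set ℝ := fun p => heavyBallSet μ (α + 1 / (p.1 + 1)) (1 / (p.2 + 1))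
  have hK : Icc (0:ℝ) 1 ⊆ closure (interior (Icc 0 1)) := by
    rw [interior_Icc, closure_Ioo zero_ne_one]
  have hKU : ∀ p, Icc (0:ℝ) 1 ⊆ closure (U p) := fun ⟨n, m⟩ =>
    (hdense (1 / (n + 2)) (by positivity)).trans <| closure_mono fun y hy =>
      mem_heavyBallSet_of_locDim_lt (by positivity) <| hy.2.trans_lt <| EReal.coe_lt_coe_iff.2 <|
        add_lt_add_right (one_div_lt_one_div_of_lt (by positivity) (by linarith)) α
  refine (subset_closure_inter_iInter_of_isOpen hK (fun p => isOpen_heavyBallSet _ _) hKU).trans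
    (closure_mono ?_)
  rintro y ⟨hy, hyU⟩
  exact ⟨hy, le_antisymm (locDim_le_of_forall_nat_mem_heavyBallSet hα0 fun n m =>
    mem_iInter.1 hyU (n, m)) (hlow y hy)⟩

/-- If `μ` is a non-atomic measure supported on `[0,1]`, `0 ≤ α < 1`,
`{x : h_μ(x) ≤ α + ε}` is dense in `[0,1]` for every `ε > 0`,
and `h_μ(x) ≥ α` for all `x ∈ [0,1]`, then `E_μ(α) = {x : h_μ(x) = α}` is dense in `[0,1]`. -/
theorem level_set_dense (μ : Measure ℝ) [NullSingletonClass μ]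
    (hsupp : μ (Set.Icc (0:ℝ) 1)ᶜ = 0)
    (α : ℝ) (hα0 : 0 ≤ α) (hα1 : α < 1)
    (hdense : ∀ ε : ℝ, 0 < ε →
      Set.Icc (0:ℝ) 1 ⊆ closure {x ∈ Set.Icc (0:ℝ) 1 | locDim μ x ≤ ((α + ε : ℝ) : EReal)})
    (hlow : ∀ x ∈ Set.Icc (0:ℝ) 1, (α : EReal) ≤ locDim μ x) :
    Set.Icc (0:ℝ) 1 ⊆ closure {x ∈ Set.Icc (0:ℝ) 1 | locDim μ x = (α : EReal)} :=
  level_set_dense_general μ α hα0 hdense hlow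
end

section
/- There exists a strictly monotone increasing function Z : [0,1] → [0,1] whose pointwise Hölder exponent satisfies h_Z(x) = 1 for every x ∈ [0,1]. (In particular Z is homogeneously multifractal, with spectrum d_Z(1) = 1 and d_Z(h) = −∞ for h ≠ 1.) -/
open MeasureTheory Metric Filter Set
open scoped ENNReal Topology
open Classical

/-- `Z ∈ C^α(x₀)`: there are a polynomial `P` of degree less than `α` and a constant `C > 0`
such that `|Z x - P (x - x₀)| ≤ C |x - x₀| ^ α` in a neighborhood of `x₀`. -/
def HolderAt (Z : ℝ → ℝ) (α : ℝ) (x₀ : ℝ) : Prop :=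
  ∃ (P : Polynomial ℝ) (C δ : ℝ), 0 < C ∧ 0 < δ ∧
    (P = 0 ∨ (P.natDegree : ℝ) < α) ∧
    ∀ x : ℝ, |x - x₀| < δ → |Z x - P.eval (x - x₀)| ≤ C * |x - x₀| ^ α

/-- The pointwise Hölder exponent `h_Z(x₀) = sup {α ≥ 0 : Z ∈ C^α(x₀)}`. -/
noncomputable def holderExp (Z : ℝ → ℝ) (x₀ : ℝ) : EReal :=
  sSup {h : EReal | ∃ α : ℝ, 0 ≤ α ∧ HolderAt Z α x₀ ∧ h = (α : EReal)}

/-- The multifractal spectrum of a function on `[0,1]`: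
`d_Z(h) = dim_H {x ∈ [0,1] : h_Z(x) = h}`, with `dim ∅ = -∞`. -/
noncomputable def specF (Z : ℝ → ℝ) (h : EReal) : EReal :=
  dimHE {x ∈ Set.Icc (0:ℝ) 1 | holderExp Z x = h}

/-- A function on `[0,1]` is homogeneously multifractal (HM) if its restriction to any
non-degenerate subinterval of `[0,1]` has the same multifractal spectrum as `Z` itself. -/
def IsHMF (Z : ℝ → ℝ) : Prop :=
  ∀ a b : ℝ, 0 ≤ a → a < b → b ≤ 1 →
    ∀ h : EReal, dimHE {x ∈ Set.Ioo a b | holderExp Z x = h} = specF Z h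

/-- The class `𝓕` of admissible spectra: suprema of countably many step functions `f_n`,
each supported by a closed subinterval `Iₙ ⊆ [0,1]`, bounded away from `0` uniformly,
constant (with value `vₙ ∈ [0,1]`) on `Iₙ`, with `fₙ(x) ≤ x` on `Iₙ`, and `f = sup_n fₙ`. -/
def MemF (f : ℝ → EReal) : Prop :=
  ∃ (I : ℕ → Set ℝ) (v : ℕ → EReal),
    (∀ n, ∃ a b : ℝ, a ≤ b ∧ I n = Set.Icc a b) ∧
    (∀ n, I n ⊆ Set.Icc (0:ℝ) 1) ∧
    (∃ c : ℝ, 0 < c ∧ ∀ n, ∀ x ∈ I n, c ≤ x) ∧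
    (∀ n, 0 ≤ v n ∧ v n ≤ 1) ∧
    (∀ n, ∀ x ∈ I n, v n ≤ (x : EReal)) ∧
    (∀ x : ℝ, f x = ⨆ n, (if x ∈ I n then v n else ⊥))

/-!
Take `Z x = x + W x`, where `W x = ∑ₙ cₙ 2⁻ⁿ ‖2ⁿ x‖` is a Takagi function (`‖y‖` being the distance
from `y` to the nearest integer) with the slowly decaying weights `cₙ = 1 / (4 (n + 1) (n + 2))`.
Since `∑ cₙ = 1/4`, `W` is `1/4`-Lipschitz, so `Z` is increasing, fixes `0` and `1`, and lies in
`C¹(x₀)` at every point.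

Conversely, take the dyadic interval `[k 2⁻ᴺ, (k + 1) 2⁻ᴺ]` containing `x₀`. The terms of `W` with
`n < N` are affine on it and those with `n > N` vanish at its endpoints and midpoint, so the second
difference of `Z` over it is exactly `-c_N 2⁻ᴺ`. If `Z ∈ C^α(x₀)` with `α > 1`, this second
difference is `O(2^{-Nα} + 2^{-2N})`, that is `c_N = O(2^{-N(α-1)} + 2^{-N})`, which is impossible
because `c_N` decays only polynomially.
-/

open Asymptotics

noncomputable def saw (x : ℝ) : ℝ := |x - round x|

lemma saw_nonneg (x : ℝ) : 0 ≤ saw x := abs_nonneg _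

lemma saw_le_half (x : ℝ) : saw x ≤ 1 / 2 := abs_sub_round x

lemma saw_intCast (k : ℤ) : saw k = 0 := by simp [saw]

lemma saw_le_saw_add (x y : ℝ) : saw x ≤ saw y + |x - y| :=
  calc saw x ≤ |x - round y| := round_le x (round y)
    _ ≤ |x - y| + saw y := abs_sub_le x y _
    _ = saw y + |x - y| := add_comm _ _

lemma abs_saw_sub_saw_le (x y : ℝ) : |saw x - saw y| ≤ |x - y| := by
  have := saw_le_saw_add x y
  have := saw_le_saw_add y x
  rw [abs_sub_comm y x] at this
  exact abs_sub_le_iff.2 ⟨by linarith, by linarith⟩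

lemma saw_eq_abs_sub {x : ℝ} {m : ℤ} (h : |x - m| ≤ 1 / 2) : saw x = |x - m| := by
  refine le_antisymm (round_le x m) ?_
  rcases eq_or_ne (round x) m with hm | hm
  · rw [saw, hm]
  · have h₁ : (1 : ℝ) ≤ |(round x : ℝ) - m| := by exact_mod_cast Int.one_le_abs (sub_ne_zero.2 hm)
    have h₂ := abs_sub_le (round x : ℝ) x m
    rw [abs_sub_comm (round x : ℝ) x] at h₂
    unfold saw
    linarith

lemma saw_intCast_add_half (k : ℤ) : saw (k + 1 / 2) = 1 / 2 := by
  rw [saw_eq_abs_sub (m := k)] <;> norm_num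

lemma abs_midpoint_sub_le {a b x η : ℝ} (ha : |a - x| ≤ η) (hb : |b - x| ≤ η) :
    |(a + b) / 2 - x| ≤ η := by
  rw [abs_le] at *
  constructor <;> linarith

noncomputable def secondDiff (f : ℝ → ℝ) (a b : ℝ) : ℝ := f a + f b - 2 * f ((a + b) / 2)

lemma abs_secondDiff_le {f : ℝ → ℝ} {a b B : ℝ} (ha : |f a| ≤ B) (hb : |f b| ≤ B)
    (hm : |f ((a + b) / 2)| ≤ B) : |secondDiff f a b| ≤ 4 * B := by
  rw [abs_le] at *
  unfold secondDiff
  constructor <;> linarith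

lemma secondDiff_add (f g : ℝ → ℝ) (a b : ℝ) :
    secondDiff (fun x => f x + g x) a b = secondDiff f a b + secondDiff g a b := by
  unfold secondDiff; ring

lemma secondDiff_saw_eq_zero (m : ℤ) {a b : ℝ} (ha : |a - m| ≤ 1 / 2) (hb : |b - m| ≤ 1 / 2)
    (hab : 0 ≤ (a - m) * (b - m)) : secondDiff saw a b = 0 := by
  have hmid : (a + b) / 2 - m = ((a - m) + (b - m)) / 2 := by ring
  rw [secondDiff, saw_eq_abs_sub ha, saw_eq_abs_sub hb, saw_eq_abs_sub (abs_midpoint_sub_le ha hb),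
    hmid, abs_div, abs_two, (abs_add_eq_add_abs_iff _ _).2 (mul_nonneg_iff.1 hab)]
  ring

lemma secondDiff_saw_eq_zero_of_le (j : ℤ) {a b : ℝ} (ha : j / 2 ≤ a) (hab : a ≤ b)
    (hb : b ≤ (j + 1) / 2) : secondDiff saw a b = 0 := by
  obtain ⟨q, rfl | rfl⟩ := Int.even_or_odd' j <;> push_cast at ha hb
  · exact secondDiff_saw_eq_zero q (abs_le.2 ⟨by linarith, by linarith⟩)
      (abs_le.2 ⟨by linarith, by linarith⟩) (mul_nonneg (by linarith) (by linarith))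
  · refine secondDiff_saw_eq_zero (q + 1) ?_ ?_ ?_ <;> push_cast
    · exact abs_le.2 ⟨by linarith, by linarith⟩
    · exact abs_le.2 ⟨by linarith, by linarith⟩
    · exact mul_nonneg_of_nonpos_of_nonpos (by linarith) (by linarith)

lemma exists_half_int_le_dyadic (n : ℕ) (k : ℤ) :
    ∃ j : ℤ, (j : ℝ) / 2 ≤ k / 2 ^ (n + 1) ∧ ((k : ℝ) + 1) / 2 ^ (n + 1) ≤ (j + 1) / 2 := by
  have h2n : (0 : ℤ) < 2 ^ n := by positivity
  have h₁ : ((k / 2 ^ n * 2 ^ n : ℤ) : ℝ) ≤ k := by exact_mod_cast Int.ediv_mul_le k h2n.ne'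
  have h₂ : ((k + 1 : ℤ) : ℝ) ≤ ((k / 2 ^ n + 1) * 2 ^ n : ℤ) := by
    exact_mod_cast Int.lt_ediv_add_one_mul_self k h2n
  push_cast at h₁ h₂
  refine ⟨k / 2 ^ n, ?_, ?_⟩ <;> rw [pow_succ, div_le_div_iff₀ (by positivity) (by positivity)]
    <;> linarith

lemma secondDiff_saw_dyadic (n : ℕ) (k : ℤ) :
    secondDiff saw (k / 2 ^ (n + 1)) ((k + 1) / 2 ^ (n + 1)) = 0 := by
  obtain ⟨j, hj₁, hj₂⟩ := exists_half_int_le_dyadic n k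
  exact secondDiff_saw_eq_zero_of_le j hj₁ (by gcongr; linarith) hj₂

noncomputable def weightedTakagi (c : ℕ → ℝ) (x : ℝ) : ℝ := ∑' n, c n * saw (2 ^ n * x) / 2 ^ n

lemma summable_weightedTakagi {c : ℕ → ℝ} (hc : Summable c) (x : ℝ) :
    Summable fun n => c n * saw (2 ^ n * x) / 2 ^ n := by
  refine hc.abs.of_norm_bounded fun n => ?_
  have h2n : (0 : ℝ) < 2 ^ n := by positivity
  calc ‖c n * saw (2 ^ n * x) / 2 ^ n‖ = |c n| * saw (2 ^ n * x) / 2 ^ n := by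
        rw [Real.norm_eq_abs, abs_div, abs_mul, abs_of_nonneg (saw_nonneg _), abs_of_pos h2n]
    _ ≤ |c n| * 1 / 1 := by
        gcongr
        · exact (saw_le_half _).trans (by norm_num)
        · exact one_le_pow₀ one_le_two
    _ = |c n| := by ring

lemma abs_weightedTakagi_sub_le {c : ℕ → ℝ} (hc : Summable c) (x y : ℝ) :
    |weightedTakagi c x - weightedTakagi c y| ≤ (∑' n, |c n|) * |x - y| := by
  rw [weightedTakagi, weightedTakagi,
    ← (summable_weightedTakagi hc x).tsum_sub (summable_weightedTakagi hc y), ← Real.norm_eq_abs]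
  refine tsum_of_norm_bounded (hc.abs.hasSum.mul_right _) fun n => ?_
  have h2n : (0 : ℝ) < 2 ^ n := by positivity
  calc ‖c n * saw (2 ^ n * x) / 2 ^ n - c n * saw (2 ^ n * y) / 2 ^ n‖
      = |c n| * |saw (2 ^ n * x) - saw (2 ^ n * y)| / 2 ^ n := by
        rw [Real.norm_eq_abs, ← sub_div, ← mul_sub, abs_div, abs_mul, abs_of_pos h2n]
    _ ≤ |c n| * (2 ^ n * |x - y|) / 2 ^ n := by
        gcongr
        calc _ ≤ |2 ^ n * x - 2 ^ n * y| := abs_saw_sub_saw_le _ _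
          _ = 2 ^ n * |x - y| := by rw [← mul_sub, abs_mul, abs_of_pos h2n]
    _ = |c n| * |x - y| := by field_simp

lemma weightedTakagi_intCast (c : ℕ → ℝ) (k : ℤ) : weightedTakagi c k = 0 := by
  have h (n : ℕ) : (2 : ℝ) ^ n * k = ((2 ^ n * k : ℤ) : ℝ) := by push_cast; ring
  simp only [weightedTakagi, h, saw_intCast, mul_zero, zero_div, tsum_zero]

lemma secondDiff_weightedTakagi {c : ℕ → ℝ} (hc : Summable c) (a b : ℝ) :
    secondDiff (weightedTakagi c) a b
      = ∑' n, c n / 2 ^ n * secondDiff saw (2 ^ n * a) (2 ^ n * b) := by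
  have hs := summable_weightedTakagi hc
  rw [secondDiff, weightedTakagi, weightedTakagi, weightedTakagi, ← tsum_mul_left,
    ← (hs a).tsum_add (hs b), ← ((hs a).add (hs b)).tsum_sub ((hs _).mul_left 2)]
  congr 1 with n
  rw [secondDiff, show (2 : ℝ) ^ n * ((a + b) / 2) = (2 ^ n * a + 2 ^ n * b) / 2 by ring]
  ring

lemma secondDiff_saw_dyadic_of_lt {n N : ℕ} (h : N < n) (k : ℤ) :
    secondDiff saw (2 ^ n * (k / 2 ^ N)) (2 ^ n * ((k + 1) / 2 ^ N)) = 0 := by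
  obtain ⟨d, rfl⟩ := Nat.exists_eq_add_of_lt h
  have e₁ : (2 : ℝ) ^ (N + d + 1) * (k / 2 ^ N) = ((2 ^ (d + 1) * k : ℤ) : ℝ) := by
    push_cast; field_simp; ring
  have e₂ : (2 : ℝ) ^ (N + d + 1) * ((k + 1) / 2 ^ N) = ((2 ^ (d + 1) * (k + 1) : ℤ) : ℝ) := by
    push_cast; field_simp; ring
  have e₃ : ((2 ^ (d + 1) * k : ℤ) + ((2 ^ (d + 1) * (k + 1) : ℤ)) : ℝ) / 2
      = ((2 ^ d * (2 * k + 1) : ℤ) : ℝ) := by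
    push_cast; ring
  rw [secondDiff, e₁, e₂, e₃, saw_intCast, saw_intCast, saw_intCast]
  ring

lemma secondDiff_saw_dyadic_of_gt {n N : ℕ} (h : n < N) (k : ℤ) :
    secondDiff saw (2 ^ n * (k / 2 ^ N)) (2 ^ n * ((k + 1) / 2 ^ N)) = 0 := by
  obtain ⟨d, rfl⟩ := Nat.exists_eq_add_of_lt h
  convert secondDiff_saw_dyadic d k using 2 <;> (field_simp; ring)

lemma secondDiff_saw_dyadic_self (N : ℕ) (k : ℤ) :
    secondDiff saw (2 ^ N * (k / 2 ^ N)) (2 ^ N * ((k + 1) / 2 ^ N)) = -1 := by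
  have e : ((k : ℝ) + (k + 1)) / 2 = k + 1 / 2 := by ring
  rw [secondDiff, mul_div_cancel₀ _ (by positivity), mul_div_cancel₀ _ (by positivity), e,
    saw_intCast_add_half, ← Int.cast_one, ← Int.cast_add, saw_intCast, saw_intCast]
  norm_num

lemma secondDiff_weightedTakagi_dyadic {c : ℕ → ℝ} (hc : Summable c) (N : ℕ) (k : ℤ) :
    secondDiff (weightedTakagi c) (k / 2 ^ N) ((k + 1) / 2 ^ N) = -(c N / 2 ^ N) := by
  rw [secondDiff_weightedTakagi hc, tsum_eq_single N, secondDiff_saw_dyadic_self, mul_neg_one]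
  intro n hn
  rcases hn.lt_or_gt with h | h
  · rw [secondDiff_saw_dyadic_of_gt h, mul_zero]
  · rw [secondDiff_saw_dyadic_of_lt h, mul_zero]

/-- Writing `P = (affine) + X² Q`, the affine part has no second difference. -/
lemma Polynomial.exists_abs_secondDiff_le (P : Polynomial ℝ) (x₀ : ℝ) :
    ∃ M, ∀ η ≤ 1, ∀ a b, |a - x₀| ≤ η → |b - x₀| ≤ η →
      |secondDiff (fun x => P.eval (x - x₀)) a b| ≤ M * η ^ 2 := by
  open Polynomial in
  have hdeg : (P %ₘ X ^ 2).degree ≤ 1 := by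
    have h := degree_modByMonic_lt P (monic_X_pow (R := ℝ) 2)
    rw [degree_X_pow] at h
    exact Order.le_of_lt_succ h
  have hP (t : ℝ) : P.eval t = (P %ₘ X ^ 2).coeff 1 * t + (P %ₘ X ^ 2).coeff 0
      + t ^ 2 * (P /ₘ X ^ 2).eval t := by
    conv_lhs => rw [← modByMonic_add_div P (X ^ 2), eq_X_add_C_of_degree_le_one hdeg]
    simp
  set Q := P /ₘ X ^ 2
  obtain ⟨M, hM⟩ := isCompact_Icc.exists_bound_of_continuousOn (Q.continuous.continuousOn
    (s := Icc (-1 : ℝ) 1))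
  refine ⟨4 * M, fun η hη a b ha hb => ?_⟩
  have hbound (x : ℝ) (hx : |x - x₀| ≤ η) : |(x - x₀) ^ 2 * Q.eval (x - x₀)| ≤ M * η ^ 2 := by
    have hQ := hM (x - x₀) (abs_le.1 (hx.trans hη))
    rw [abs_mul, abs_pow, mul_comm]
    exact mul_le_mul hQ (pow_le_pow_left₀ (abs_nonneg _) hx 2) (by positivity)
      ((norm_nonneg _).trans hQ)
  have hsd : secondDiff (fun x => P.eval (x - x₀)) a b
      = secondDiff (fun x => (x - x₀) ^ 2 * Q.eval (x - x₀)) a b := by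
    simp only [secondDiff, hP]; ring
  rw [hsd, mul_assoc]
  exact abs_secondDiff_le (hbound a ha) (hbound b hb) (hbound _ (abs_midpoint_sub_le ha hb))

lemma abs_floor_div_sub_le (x : ℝ) (N : ℕ) :
    |⌊2 ^ N * x⌋ / 2 ^ N - x| ≤ 2⁻¹ ^ N ∧ |(⌊2 ^ N * x⌋ + 1) / 2 ^ N - x| ≤ 2⁻¹ ^ N := by
  have h₁ := Int.floor_le (2 ^ N * x)
  have h₂ := Int.lt_floor_add_one (2 ^ N * x)
  have h2N : (0 : ℝ) < 2 ^ N := by positivity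
  rw [inv_pow, abs_le, abs_le, le_sub_iff_add_le, sub_le_iff_le_add, le_sub_iff_add_le,
    sub_le_iff_le_add, le_div_iff₀ h2N, div_le_iff₀ h2N, le_div_iff₀ h2N, div_le_iff₀ h2N]
  refine ⟨⟨?_, ?_⟩, ?_, ?_⟩ <;> nlinarith [mul_inv_cancel₀ h2N.ne']

lemma two_pow_mul_inv_two_pow_rpow (N : ℕ) (α : ℝ) :
    (2 : ℝ) ^ N * ((2 : ℝ)⁻¹ ^ N) ^ α = ((2 : ℝ) ^ (1 - α)) ^ N := by
  rw [← Real.rpow_natCast, ← Real.rpow_natCast, ← Real.rpow_natCast, ← Real.rpow_mul (by norm_num),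
    Real.inv_rpow (by norm_num), ← Real.rpow_mul (by norm_num), ← Real.rpow_neg (by norm_num),
    ← Real.rpow_add (by norm_num)]
  ring_nf

lemma HolderAt.isBigO_secondDiff_dyadic {f : ℝ → ℝ} {α x₀ : ℝ} (hf : HolderAt f α x₀)
    (hα : 0 ≤ α) :
    (fun N : ℕ => 2 ^ N * secondDiff f (⌊2 ^ N * x₀⌋ / 2 ^ N) ((⌊2 ^ N * x₀⌋ + 1) / 2 ^ N))
      =O[atTop] fun N => ((2 : ℝ) ^ (1 - α)) ^ N + 2⁻¹ ^ N := by
  obtain ⟨P, C, δ, hC, hδ, -, hfP⟩ := hf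
  obtain ⟨M, hM⟩ := P.exists_abs_secondDiff_le x₀
  have hsmall : ∀ᶠ N : ℕ in atTop, (2 : ℝ)⁻¹ ^ N < δ :=
    (tendsto_pow_atTop_nhds_zero_of_lt_one (by norm_num) (by norm_num)).eventually
      (gt_mem_nhds hδ)
  refine IsBigO.of_bound (4 * C + |M|) ?_
  filter_upwards [hsmall] with N hN
  have hpow := two_pow_mul_inv_two_pow_rpow N α
  set η : ℝ := 2⁻¹ ^ N
  obtain ⟨ha, hb⟩ := abs_floor_div_sub_le x₀ N
  set a := (⌊2 ^ N * x₀⌋ / 2 ^ N : ℝ)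
  set b := ((⌊2 ^ N * x₀⌋ + 1) / 2 ^ N : ℝ)
  have hrem (x : ℝ) (hx : |x - x₀| ≤ η) : |f x - P.eval (x - x₀)| ≤ C * η ^ α :=
    (hfP x (hx.trans_lt hN)).trans (by gcongr)
  have hsd : |secondDiff f a b| ≤ 4 * C * η ^ α + |M| * η ^ 2 :=
    calc |secondDiff f a b|
        = |secondDiff (fun x => f x - P.eval (x - x₀)) a b
            + secondDiff (fun x => P.eval (x - x₀)) a b| := by
          rw [← secondDiff_add]; simp only [sub_add_cancel]
      _ ≤ 4 * (C * η ^ α) + M * η ^ 2 := (abs_add_le _ _).trans <| add_le_add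
          (abs_secondDiff_le (hrem a ha) (hrem b hb) (hrem _ (abs_midpoint_sub_le ha hb)))
          (hM η (pow_le_one₀ (by norm_num) (by norm_num)) a b ha hb)
      _ ≤ 4 * C * η ^ α + |M| * η ^ 2 := by rw [mul_assoc]; gcongr; exact le_abs_self M
  have hη : (2 : ℝ) ^ N * η ^ 2 = η := by
    rw [sq, ← mul_assoc, ← mul_pow, mul_inv_cancel₀ two_ne_zero, one_pow, one_mul]
  rw [norm_mul, Real.norm_of_nonneg (by positivity : (0 : ℝ) ≤ 2 ^ N), Real.norm_eq_abs,
    Real.norm_of_nonneg (by positivity)]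
  calc 2 ^ N * |secondDiff f a b| ≤ 2 ^ N * (4 * C * η ^ α + |M| * η ^ 2) := by gcongr
    _ = 4 * C * (2 ^ N * η ^ α) + |M| * (2 ^ N * η ^ 2) := by ring
    _ = 4 * C * (2 ^ (1 - α)) ^ N + |M| * η := by rw [hpow, hη]
    _ ≤ (4 * C + |M|) * ((2 ^ (1 - α)) ^ N + η) := by
      have : 0 ≤ η := by positivity
      have : (0 : ℝ) ≤ (2 ^ (1 - α)) ^ N := by positivity
      nlinarith [abs_nonneg M]

lemma not_holderAt_of_secondDiff_dyadic {f : ℝ → ℝ} {c : ℕ → ℝ}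
    (hc : ∀ ρ : ℝ, 0 < ρ → ρ < 1 → (fun N => ρ ^ N) =o[atTop] c)
    (hf : ∀ (N : ℕ) (k : ℤ), |c N| ≤ 2 ^ N * |secondDiff f (k / 2 ^ N) ((k + 1) / 2 ^ N)|)
    {α x₀ : ℝ} (hα : 1 < α) : ¬ HolderAt f α x₀ := by
  intro hH
  set g : ℕ → ℝ := fun N => ((2 : ℝ) ^ (1 - α)) ^ N + 2⁻¹ ^ N
  have hcg : c =O[atTop] g := by
    refine (IsBigO.of_bound 1 (Eventually.of_forall fun N => ?_)).trans
      (hH.isBigO_secondDiff_dyadic (by linarith))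
    rw [one_mul, Real.norm_eq_abs, norm_mul, Real.norm_of_nonneg (by positivity), Real.norm_eq_abs]
    exact hf N _
  have hgc : g =o[atTop] c :=
    (hc _ (by positivity) (Real.rpow_lt_one_of_one_lt_of_neg one_lt_two (by linarith))).add
      (hc _ (by norm_num) (by norm_num))
  exact isLittleO_irrefl (Frequently.of_forall fun N => (by positivity : g N ≠ 0))
    (hgc.trans_isBigO hcg)

lemma holderExp_eq {f : ℝ → ℝ} {β x₀ : ℝ} (hβ : 0 ≤ β) (h : HolderAt f β x₀)
    (hgt : ∀ α > β, ¬ HolderAt f α x₀) : holderExp f x₀ = β := by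
  refine le_antisymm (sSup_le ?_) (le_sSup ⟨β, hβ, h, rfl⟩)
  rintro _ ⟨α, -, hα, rfl⟩
  exact EReal.coe_le_coe_iff.2 (not_lt.1 fun hlt => hgt α hlt hα)

lemma holderAt_one_of_abs_sub_le {f : ℝ → ℝ} {K x₀ : ℝ}
    (h : ∀ x, |f x - f x₀| ≤ K * |x - x₀|) : HolderAt f 1 x₀ := by
  refine ⟨Polynomial.C (f x₀), max K 1, 1, by positivity, one_pos, Or.inr (by simp), fun x _ => ?_⟩
  rw [Polynomial.eval_C, Real.rpow_one]
  exact (h x).trans (by gcongr; exact le_max_left K 1)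

/-- Any weights with `∑ |cₙ| < 1` and subexponential decay would do. -/
noncomputable def polyWeight (n : ℕ) : ℝ := 1 / (4 * (n + 1) * (n + 2))

lemma polyWeight_pos (n : ℕ) : 0 < polyWeight n := by unfold polyWeight; positivity

lemma polyWeight_nonneg (n : ℕ) : 0 ≤ polyWeight n := (polyWeight_pos n).le

lemma sum_range_polyWeight (N : ℕ) :
    ∑ n ∈ Finset.range N, polyWeight n = 1 / 4 - 1 / (4 * (N + 1)) := by
  induction N with
  | zero => norm_num
  | succ N ih =>
    rw [Finset.sum_range_succ, ih, polyWeight]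
    push_cast
    field_simp
    ring

lemma sum_range_polyWeight_le (N : ℕ) : ∑ n ∈ Finset.range N, polyWeight n ≤ 1 / 4 := by
  rw [sum_range_polyWeight]
  linarith [show 0 ≤ 1 / (4 * ((N : ℝ) + 1)) by positivity]

lemma summable_polyWeight : Summable polyWeight :=
  summable_of_sum_range_le polyWeight_nonneg sum_range_polyWeight_le

lemma isLittleO_pow_polyWeight {ρ : ℝ} (hρ₀ : 0 < ρ) (hρ₁ : ρ < 1) :
    (fun N => ρ ^ N) =o[atTop] polyWeight := by
  rw [isLittleO_iff_tendsto' (Eventually.of_forall fun N h => absurd h (polyWeight_pos N).ne')]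
  have hρ : |ρ| < 1 := by rwa [abs_of_pos hρ₀]
  have h := (((tendsto_pow_const_mul_const_pow_of_abs_lt_one 2 hρ).const_mul 4).add
    ((tendsto_pow_const_mul_const_pow_of_abs_lt_one 1 hρ).const_mul 12)).add
    ((tendsto_pow_const_mul_const_pow_of_abs_lt_one 0 hρ).const_mul 8)
  simp only [mul_zero, add_zero] at h
  refine h.congr fun N => ?_
  rw [polyWeight]
  field_simp
  ring

noncomputable def monofractalFun (x : ℝ) : ℝ := x + weightedTakagi polyWeight x

lemma abs_weightedTakagi_polyWeight_sub_le (x y : ℝ) :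
    |weightedTakagi polyWeight x - weightedTakagi polyWeight y| ≤ |x - y| / 4 := by
  have hsum : ∑' n, |polyWeight n| ≤ 1 / 4 := by
    simp_rw [abs_of_nonneg (polyWeight_nonneg _)]
    exact Real.tsum_le_of_sum_range_le polyWeight_nonneg sum_range_polyWeight_le
  calc _ ≤ (∑' n, |polyWeight n|) * |x - y| := abs_weightedTakagi_sub_le summable_polyWeight x y
    _ ≤ 1 / 4 * |x - y| := by gcongr
    _ = |x - y| / 4 := by ring

lemma monofractalFun_strictMono : StrictMono monofractalFun := by
  intro x y hxy
  have h := abs_le.1 (abs_weightedTakagi_polyWeight_sub_le y x)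
  rw [abs_of_pos (sub_pos.2 hxy)] at h
  unfold monofractalFun
  linarith [h.1]

lemma monofractalFun_intCast (k : ℤ) : monofractalFun k = k := by
  rw [monofractalFun, weightedTakagi_intCast, add_zero]

lemma monofractalFun_mapsTo_Icc : MapsTo monofractalFun (Icc 0 1) (Icc 0 1) := by
  have h := monofractalFun_strictMono.monotone.mapsTo_Icc (a := ((0 : ℤ) : ℝ)) (b := ((1 : ℤ) : ℝ))
  rwa [monofractalFun_intCast, monofractalFun_intCast, Int.cast_zero, Int.cast_one] at h

lemma abs_monofractalFun_sub_le (x y : ℝ) :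
    |monofractalFun x - monofractalFun y| ≤ 5 / 4 * |x - y| := by
  have hW := abs_weightedTakagi_polyWeight_sub_le x y
  have h := abs_add_le (x - y) (weightedTakagi polyWeight x - weightedTakagi polyWeight y)
  rw [show x - y + (weightedTakagi polyWeight x - weightedTakagi polyWeight y)
    = monofractalFun x - monofractalFun y by unfold monofractalFun; ring] at h
  linarith

lemma secondDiff_monofractalFun_dyadic (N : ℕ) (k : ℤ) :
    secondDiff monofractalFun (k / 2 ^ N) ((k + 1) / 2 ^ N) = -(polyWeight N / 2 ^ N) := by
  rw [show monofractalFun = fun x => x + weightedTakagi polyWeight x from rfl, secondDiff_add,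
    secondDiff_weightedTakagi_dyadic summable_polyWeight, secondDiff]
  ring

lemma holderExp_monofractalFun (x₀ : ℝ) : holderExp monofractalFun x₀ = 1 := by
  refine holderExp_eq zero_le_one (holderAt_one_of_abs_sub_le (abs_monofractalFun_sub_le · x₀))
    fun α hα => not_holderAt_of_secondDiff_dyadic (fun _ => isLittleO_pow_polyWeight)
      (fun N k => le_of_eq ?_) hα
  have h2N : (0 : ℝ) < 2 ^ N := by positivity
  rw [secondDiff_monofractalFun_dyadic, abs_neg, abs_div, abs_of_pos h2N, mul_div_cancel₀ _ h2N.ne']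

lemma sep_holderExp_eq_self {f : ℝ → ℝ} {e : EReal} (hf : ∀ x, holderExp f x = e) (s : Set ℝ) :
    {x ∈ s | holderExp f x = e} = s := by
  simp [hf]

lemma sep_holderExp_eq_empty {f : ℝ → ℝ} {e h : EReal} (hf : ∀ x, holderExp f x = e) (hh : h ≠ e)
    (s : Set ℝ) : {x ∈ s | holderExp f x = h} = ∅ := by
  simp [hf, hh.symm]

lemma dimHE_of_nonempty_interior {s : Set ℝ} (h : (interior s).Nonempty) : dimHE s = 1 := by
  rw [dimHE, if_pos (h.mono interior_subset), Real.dimH_of_nonempty_interior h]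
  simp

lemma dimHE_empty : dimHE ∅ = ⊥ := by simp [dimHE]

/-- There exists a strictly monotone increasing function `Z : [0,1] → [0,1]` whose pointwise
Hölder exponent equals `1` at every point of `[0,1]`. In particular it is homogeneously
multifractal, with `d_Z(1) = 1` and `d_Z(h) = -∞` for `h ≠ 1`. -/
theorem monofractal_increasing_function :
    ∃ Z : ℝ → ℝ, StrictMonoOn Z (Set.Icc 0 1) ∧
      Set.MapsTo Z (Set.Icc (0:ℝ) 1) (Set.Icc (0:ℝ) 1) ∧
      (∀ x ∈ Set.Icc (0:ℝ) 1, holderExp Z x = (1 : EReal)) ∧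
      IsHMF Z ∧ specF Z (1 : EReal) = 1 ∧
      (∀ h : EReal, h ≠ 1 → specF Z h = ⊥) := by
  have hexp := holderExp_monofractalFun
  have hIcc : dimHE (Icc (0 : ℝ) 1) = 1 :=
    dimHE_of_nonempty_interior (by rw [interior_Icc]; exact nonempty_Ioo.2 zero_lt_one)
  refine ⟨monofractalFun, monofractalFun_strictMono.strictMonoOn _, monofractalFun_mapsTo_Icc,
    fun x _ => hexp x, ?_, ?_, ?_⟩
  · intro a b _ hab _ h
    rcases eq_or_ne h 1 with rfl | hh
    · rw [specF, sep_holderExp_eq_self hexp, sep_holderExp_eq_self hexp, hIcc,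
        dimHE_of_nonempty_interior (by rw [interior_Ioo]; exact nonempty_Ioo.2 hab)]
    · rw [specF, sep_holderExp_eq_empty hexp hh, sep_holderExp_eq_empty hexp hh]
  · rw [specF, sep_holderExp_eq_self hexp, hIcc]
  · intro h hh
    rw [specF, sep_holderExp_eq_empty hexp hh, dimHE_empty]
end
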